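/- arXiv:1704.04145 — 2 statements merged into one kernel-verified Lean document; each statement's English description precedes it below -/
import Mathlib

section
/- Let G be a finite triangle-free simple graph in which every connected component has at least 3 vertices. Then a vertex of G is special if and only if it is a support vertex; consequently, sup(G) is the unique S(G)-set of G. -/
open SimpleGraph

namespace TotalDom

variable {V : Type*}

/-- The closed neighborhood `N[v]` of a vertex. -/
def cnbr (G : SimpleGraph V) (v : V) : Set V := insert v (G.neighborSet v)

/-- `S` is a dominating set: every vertex outside `S` has a neighbor in `S`. -/
def IsDomSet (G : SimpleGraph V) (S : Set V) : Prop := ∀ v ∉ S, ∃ u ∈ S, G.Adj u v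

/-- `S` is a total dominating set: every vertex has a neighbor in `S`. -/
def IsTotalDomSet (G : SimpleGraph V) (S : Set V) : Prop := ∀ v : V, ∃ u ∈ S, G.Adj u v

/-- The domination number `γ(G)`. -/
noncomputable def domNum (G : SimpleGraph V) : ℕ :=
  sInf {n | ∃ S : Set V, IsDomSet G S ∧ S.ncard = n}

/-- The total domination number `γₜ(G)`. -/
noncomputable def totalDomNum (G : SimpleGraph V) : ℕ :=
  sInf {n | ∃ S : Set V, IsTotalDomSet G S ∧ S.ncard = n}

/-- A minimum dominating set (γ-set). -/
def IsMinDomSet (G : SimpleGraph V) (S : Set V) : Prop := IsDomSet G S ∧ S.ncard = domNum G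

/-- `S` is a packing: closed neighborhoods of distinct members are disjoint. -/
def IsPacking (G : SimpleGraph V) (S : Set V) : Prop :=
  S.Pairwise fun u v => Disjoint (cnbr G u) (cnbr G v)

/-- `M(v)`: neighbors of `v` having a neighbor outside `N[v]`. -/
def Mset (G : SimpleGraph V) (v : V) : Set V :=
  {u | G.Adj v u ∧ ∃ w, G.Adj u w ∧ w ∉ cnbr G v}

/-- `D(v)`: neighbors `u` of `v` that are not true twins of `v` with `N[u] ⊆ N[v]`. -/
def Dset (G : SimpleGraph V) (v : V) : Set V :=
  {u | G.Adj v u ∧ cnbr G u ≠ cnbr G v ∧ cnbr G u ⊆ cnbr G v}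

/-- `T(v)`: `v` together with its true twins. -/
def Tset (G : SimpleGraph V) (v : V) : Set V := {u | cnbr G u = cnbr G v}

/-- A non-isolated vertex `v` is special if no `u ∈ M(v)` satisfies `D(v) ⊆ N(u)`. -/
def Special (G : SimpleGraph V) (v : V) : Prop :=
  (G.neighborSet v).Nonempty ∧ ¬ ∃ u ∈ Mset G v, Dset G v ⊆ G.neighborSet u

/-- An `S(G)`-set: a set of special vertices containing exactly one vertex from each
true-twin equivalence class of special vertices. -/
def IsSGSet (G : SimpleGraph V) (S : Set V) : Prop :=
  (∀ u ∈ S, Special G u) ∧ ∀ v, Special G v → ∃! u, u ∈ S ∧ u ∈ Tset G v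

/-- `G` has no isolated vertices. -/
def NoIsolated (G : SimpleGraph V) : Prop := ∀ v : V, ∃ u, G.Adj v u

/-- `G` contains no induced copy of `H`. -/
def Free {α : Type*} (H : SimpleGraph α) (G : SimpleGraph V) : Prop := IsEmpty (H ↪g G)

/-- `H₁`: a 6-cycle plus one chord between vertices at distance two along the cycle. -/
def H1 : SimpleGraph (Fin 6) := cycleGraph 6 ⊔ fromEdgeSet {s(0, 2)}

/-- `H₂`: a 6-cycle `x₁x₂x₃x₄x₅x₆` plus the chords `x₂x₆` and `x₃x₅`. -/
def H2 : SimpleGraph (Fin 6) := cycleGraph 6 ⊔ fromEdgeSet {s(1, 5), s(2, 4)}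

/-- A leaf: a vertex of degree one. -/
def IsLeaf (G : SimpleGraph V) (v : V) : Prop := ∃! u, G.Adj v u

/-- A support vertex: a vertex adjacent to a leaf. -/
def IsSupport (G : SimpleGraph V) (v : V) : Prop := ∃ u, G.Adj v u ∧ IsLeaf G u

/-- `sup(G)`: the set of support vertices. -/
def supSet (G : SimpleGraph V) : Set V := {v | IsSupport G v}

/-
Triangle-freeness turns the definitions into statements about leaves: `D(v)` is the set of leaves
adjacent to `v` (a non-leaf neighbour `u` with `N[u] ⊆ N[v]` would close a triangle, and a leaf is
not a true twin of `v` because its component is not a single edge), and `M(v)` is the set of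
non-leaf neighbours of `v`. If `v` has a leaf `l`, every `u ∈ M(v)` misses `l ∈ D(v)`; otherwise
`D(v) = ∅` and any neighbour of `v` is in `M(v)`. Support vertices have no true twins, so each
twin class of special vertices is a singleton.
-/

variable {G : SimpleGraph V}

lemma mem_cnbr {v x : V} : x ∈ cnbr G v ↔ x = v ∨ G.Adj v x := Iff.rfl

lemma Free.not_adj_of_adj_of_adj (hC3 : Free (cycleGraph 3) G) {a b c : V}
    (hab : G.Adj a b) (hbc : G.Adj b c) : ¬ G.Adj a c := by
  intro hac
  refine hC3.false ⟨⟨![a, b, c], ?_⟩, ?_⟩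
  · intro i j hij
    fin_cases i <;> fin_cases j <;> simp_all [hab.ne, hbc.ne, hac.ne, hab.ne', hbc.ne', hac.ne']
  · intro i j
    fin_cases i <;> fin_cases j <;>
      dsimp only [DFunLike.coe] <;> simp [hab, hbc, hac, hab.symm, hbc.symm, hac.symm] <;> decide

lemma IsLeaf.eq_of_adj {l v w : V} (hl : IsLeaf G l) (hv : G.Adj l v) (hw : G.Adj l w) :
    w = v := by
  obtain ⟨u, -, hu⟩ := hl
  exact (hu w hw).trans (hu v hv).symm

lemma ncard_supp_le_two_of_adj {u v : V} (huv : G.Adj u v)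
    (hu : ∀ w, G.Adj u w → w = v) (hv : ∀ w, G.Adj v w → w = u) :
    (G.connectedComponentMk u).supp.ncard ≤ 2 := by
  have walk_stays : ∀ {x y : V} (_ : G.Walk x y), x = u ∨ x = v → y = u ∨ y = v := by
    intro x y p
    induction p with
    | nil => exact id
    | cons h _ ih =>
      rintro (rfl | rfl)
      · exact ih (Or.inr (hu _ h))
      · exact ih (Or.inl (hv _ h))
  have hsub : (G.connectedComponentMk u).supp ⊆ {u, v} := by
    intro w hw
    obtain ⟨p⟩ := (ConnectedComponent.exact hw).symm
    simpa using walk_stays p (Or.inl rfl)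
  calc (G.connectedComponentMk u).supp.ncard ≤ ({u, v} : Set V).ncard :=
        Set.ncard_le_ncard hsub (Set.toFinite _)
    _ = 2 := Set.ncard_pair huv.ne

lemma IsLeaf.exists_adj_ne {l v : V} (hl : IsLeaf G l) (hlv : G.Adj l v)
    (hv : 3 ≤ (G.connectedComponentMk v).supp.ncard) : ∃ w, G.Adj v w ∧ w ≠ l := by
  by_contra! h
  have := ncard_supp_le_two_of_adj hlv.symm h fun w hw => hl.eq_of_adj hlv hw
  omega

lemma eq_of_cnbr_eq_of_isSupport {u v : V} (hv : IsSupport G v)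
    (hv3 : 3 ≤ (G.connectedComponentMk v).supp.ncard) (heq : cnbr G u = cnbr G v) : u = v := by
  obtain ⟨l, hvl, hl⟩ := hv
  rcases mem_cnbr.1 (heq ▸ mem_cnbr.2 (Or.inr hvl) : l ∈ cnbr G u) with rfl | hul
  · obtain ⟨w, hvw, hwl⟩ := hl.exists_adj_ne hvl.symm hv3
    rcases mem_cnbr.1 (heq ▸ mem_cnbr.2 (Or.inr hvw) : w ∈ cnbr G l) with rfl | hlw
    · exact absurd rfl hwl
    · exact absurd (hl.eq_of_adj hvl.symm hlw) hvw.ne.symm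
  · exact hl.eq_of_adj hvl.symm hul.symm

lemma isSGSet_iff_eq_setOf_special
    (htwin : ∀ u v, Special G v → cnbr G u = cnbr G v → u = v) {S : Set V} :
    IsSGSet G S ↔ S = {v | Special G v} := by
  constructor
  · rintro ⟨hS, hunique⟩
    ext v
    refine ⟨hS v, fun hv => ?_⟩
    obtain ⟨u, ⟨huS, huv⟩, -⟩ := hunique v hv
    rwa [← htwin u v hv huv]
  · rintro rfl
    exact ⟨fun u hu => hu, fun v hv => ⟨v, ⟨hv, rfl⟩, fun u hu => htwin u v hv hu.2⟩⟩

lemma mem_Dset_iff (hC3 : Free (cycleGraph 3) G) {u v : V}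
    (hv : 3 ≤ (G.connectedComponentMk v).supp.ncard) :
    u ∈ Dset G v ↔ G.Adj v u ∧ IsLeaf G u := by
  constructor
  · rintro ⟨hvu, -, hsub⟩
    refine ⟨hvu, v, hvu.symm, fun w huw => ?_⟩
    rcases mem_cnbr.1 (hsub (mem_cnbr.2 (Or.inr huw))) with rfl | hvw
    · rfl
    · exact absurd hvw (hC3.not_adj_of_adj_of_adj hvu huw)
  · rintro ⟨hvu, hu⟩
    refine ⟨hvu, fun heq => ?_, fun x hx => ?_⟩
    · obtain ⟨w, hvw, hwu⟩ := hu.exists_adj_ne hvu.symm hv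
      rcases mem_cnbr.1 (heq ▸ mem_cnbr.2 (Or.inr hvw) : w ∈ cnbr G u) with rfl | huw
      · exact hwu rfl
      · exact hvw.ne (hu.eq_of_adj hvu.symm huw).symm
    · rcases mem_cnbr.1 hx with rfl | hux
      · exact mem_cnbr.2 (Or.inr hvu)
      · exact mem_cnbr.2 (Or.inl (hu.eq_of_adj hvu.symm hux))

lemma mem_Mset_of_adj (hC3 : Free (cycleGraph 3) G) {u v w : V}
    (hvu : G.Adj v u) (huw : G.Adj u w) (hwv : w ≠ v) :
    u ∈ Mset G v := by
  refine ⟨hvu, w, huw, fun hw => ?_⟩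
  rcases mem_cnbr.1 hw with rfl | hvw
  · exact hwv rfl
  · exact hC3.not_adj_of_adj_of_adj hvu huw hvw

lemma special_iff_isSupport (hC3 : Free (cycleGraph 3) G) {v : V}
    (hv : 3 ≤ (G.connectedComponentMk v).supp.ncard) :
    Special G v ↔ IsSupport G v := by
  constructor
  · rintro ⟨⟨u, hvu⟩, hnot⟩
    by_contra hns
    refine hnot ⟨u, ?_, fun x hx => ?_⟩
    · by_contra hu
      refine hns ⟨u, hvu, v, hvu.symm, fun w huw => ?_⟩
      by_contra hwv
      exact hu (mem_Mset_of_adj hC3 hvu huw hwv)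
    · exact absurd ⟨x, (mem_Dset_iff hC3 hv).1 hx⟩ hns
  · rintro ⟨l, hvl, hl⟩
    refine ⟨⟨l, hvl⟩, ?_⟩
    rintro ⟨u, ⟨hvu, -⟩, hsub⟩
    have hul : G.Adj u l := hsub ((mem_Dset_iff hC3 hv).2 ⟨hvl, hl⟩)
    exact hvu.ne (hl.eq_of_adj hvl.symm hul.symm).symm

theorem stmt11_general {V : Type*} (G : SimpleGraph V)
    (hC3 : Free (cycleGraph 3) G)
    (hcomp : ∀ v : V, 3 ≤ (G.connectedComponentMk v).supp.ncard) :
    (∀ v : V, Special G v ↔ IsSupport G v) ∧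
      IsSGSet G (supSet G) ∧ ∀ S : Set V, IsSGSet G S → S = supSet G := by
  have hspec : ∀ v, Special G v ↔ IsSupport G v := fun v => special_iff_isSupport hC3 (hcomp v)
  have hsup : {v | Special G v} = supSet G := Set.ext hspec
  have htwin : ∀ u v, Special G v → cnbr G u = cnbr G v → u = v := fun _ v hv =>
    eq_of_cnbr_eq_of_isSupport ((hspec v).1 hv) (hcomp v)
  refine ⟨hspec, (isSGSet_iff_eq_setOf_special htwin).2 hsup.symm, fun S hS => ?_⟩
  rw [(isSGSet_iff_eq_setOf_special htwin).1 hS, hsup]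

/-- In a triangle-free graph all of whose connected components have at least 3 vertices,
a vertex is special iff it is a support vertex; consequently `sup(G)` is the unique
`S(G)`-set of `G`. -/
theorem stmt11 {V : Type*} [Fintype V] (G : SimpleGraph V) (hiso : NoIsolated G)
    (hC3 : Free (cycleGraph 3) G)
    (hcomp : ∀ v : V, 3 ≤ (G.connectedComponentMk v).supp.ncard) :
    (∀ v : V, Special G v ↔ IsSupport G v) ∧
      IsSGSet G (supSet G) ∧ ∀ S : Set V, IsSGSet G S → S = supSet G :=
  stmt11_general G hC3 hcomp

end TotalDom
end

section
/- Let G be a finite connected block graph with at least two blocks. Then γt(G) = 2γ(G) if and only if the following three conditions hold: (1) G has a unique minimum dominating set D, (2) D = D1 ∪ D2, and (3) D is a packing in G; where D1 is the set of cut-vertices that are the unique cut-vertex of some block of G, and D2 is the set of cut-vertices having at least two neighbors which are not cut-vertices and which belong to different blocks of G. -/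
/-!
Adding to a minimum dominating set `D` one neighbour of each of its vertices gives `γₜ ≤ 2γ`,
and any saving in this construction breaks equality. So `γₜ = 2γ` forces every minimum dominating
set to be a packing and, in a block graph, to consist of cut-vertices: a neighbour of a non-cut
`d ∈ D` could replace `d` and give a minimum dominating set that is not a packing. Here we use
that in a block graph every cycle spans a clique, so the closed neighbourhood of a non-cut-vertex
is a block. If some `d ∈ D` lay outside `D₁ ∪ D₂`, a cut-neighbour `c` of `d` would dominate all
non-cut neighbours of `d`, and each cut-neighbour of `d` could be served by a private neighbour of
another member of `D` (two of them would close a 4- or 6-cycle whose chord contradicts the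
packing), saving a vertex. Hence every minimum dominating set equals `D₁ ∪ D₂`. Conversely, if
`D = D₁ ∪ D₂` is a packing, every total dominating set meets each `N[d]`, `d ∈ D`, in two
vertices, so `γₜ ≥ 2γ`.
-/

open SimpleGraph

namespace TotalDom

variable {V : Type*}

/-- `v` is a cut-vertex: deleting `v` disconnects `G`. -/
def IsCutVertex (G : SimpleGraph V) (v : V) : Prop :=
  ¬ (G.induce ({v}ᶜ : Set V)).Preconnected

/-- The subgraph of `G` induced on `B` has no cut-vertex of its own. -/
def NoCutVertexWithin (G : SimpleGraph V) (B : Set V) : Prop :=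
  ∀ v ∈ B, (B \ {v}).Nonempty → (G.induce (B \ {v})).Connected

/-- `B` is a block of `G`: a maximal vertex set inducing a connected subgraph without a
cut-vertex (a maximal 2-connected subgraph or a `K₂`). -/
def IsBlock (G : SimpleGraph V) (B : Set V) : Prop :=
  (B.Nonempty ∧ (G.induce B).Connected ∧ NoCutVertexWithin G B) ∧
    ∀ B' : Set V, B'.Nonempty → (G.induce B').Connected → NoCutVertexWithin G B' →
      B ⊆ B' → B = B'

/-- `G` is a block graph: every block of `G` is complete. -/
def IsBlockGraph (G : SimpleGraph V) : Prop :=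
  ∀ B : Set V, IsBlock G B → ∀ u ∈ B, ∀ v ∈ B, u ≠ v → G.Adj u v

/-- `D₁`: the cut-vertices that constitute the unique cut-vertex in some block of `G`. -/
def D1set (G : SimpleGraph V) : Set V :=
  {v | IsCutVertex G v ∧ ∃ B : Set V, IsBlock G B ∧ v ∈ B ∧
    ∀ u ∈ B, IsCutVertex G u → u = v}

/-- `D₂`: the cut-vertices having at least two neighbors which are not cut-vertices and
belong to different blocks of `G`. -/
def D2set (G : SimpleGraph V) : Set V :=
  {v | IsCutVertex G v ∧ ∃ x y : V, x ≠ y ∧ G.Adj v x ∧ G.Adj v y ∧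
    ¬ IsCutVertex G x ∧ ¬ IsCutVertex G y ∧
    ∃ Bx By : Set V, IsBlock G Bx ∧ IsBlock G By ∧ x ∈ Bx ∧ y ∈ By ∧ Bx ≠ By}

variable {G : SimpleGraph V}

lemma self_mem_cnbr (v : V) : v ∈ cnbr G v := Set.mem_insert v _

lemma mem_cnbr_of_adj {u v : V} (h : G.Adj v u) : u ∈ cnbr G v := Set.mem_insert_of_mem v h

section Blocks

def IsNonseparable (G : SimpleGraph V) (S : Set V) : Prop :=
  S.Nonempty ∧ (G.induce S).Connected ∧ NoCutVertexWithin G S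

variable {B S : Set V}

lemma IsBlock.isNonseparable (hB : IsBlock G B) : IsNonseparable G B := hB.1

lemma IsBlock.eq_of_subset (hB : IsBlock G B) (hS : IsNonseparable G S) (h : B ⊆ S) : B = S :=
  hB.2 S hS.1 hS.2.1 hS.2.2 h

lemma IsBlock.nontrivial_of_ne {B' : Set V} (hB : IsBlock G B) (hB' : IsBlock G B')
    (hne : B ≠ B') : Nontrivial V := by
  by_contra h
  rw [not_nontrivial_iff_subsingleton] at h
  exact hne ((hB.isNonseparable.1.eq_univ).trans hB'.isNonseparable.1.eq_univ.symm)

lemma _root_.SimpleGraph.IsClique.induce_connected (hS : G.IsClique S) (hne : S.Nonempty) :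
    (G.induce S).Connected := by
  have : Nonempty S := hne.to_subtype
  rw [induce_eq_top.2 hS]
  exact connected_top

lemma _root_.SimpleGraph.IsClique.isNonseparable (hS : G.IsClique S) (hne : S.Nonempty) :
    IsNonseparable G S :=
  ⟨hne, hS.induce_connected hne, fun _ _ h => (hS.subset Set.sdiff_subset).induce_connected h⟩

lemma isNonseparable_union_of_isClique {T : Set V} (hS : G.IsClique S) (hT : G.IsClique T)
    {x y : V} (hx : x ∈ S ∩ T) (hy : y ∈ S ∩ T) (hxy : x ≠ y) : IsNonseparable G (S ∪ T) := by
  refine ⟨⟨x, .inl hx.1⟩, induce_union_connected (hS.induce_connected ⟨x, hx.1⟩).preconnected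
    (hT.induce_connected ⟨x, hx.2⟩).preconnected ⟨x, hx⟩, fun v _ _ => ?_⟩
  -- one of `x`, `y` survives the deletion of `v` and keeps the two cliques glued
  obtain ⟨z, hzS, hzT, hzv⟩ : ∃ z ∈ S, z ∈ T ∧ z ≠ v := by
    rcases eq_or_ne x v with rfl | hxv
    exacts [⟨y, hy.1, hy.2, hxy.symm⟩, ⟨x, hx.1, hx.2, hxv⟩]
  rw [Set.union_sdiff_distrib]
  exact induce_union_connected
    ((hS.subset Set.sdiff_subset).induce_connected ⟨z, hzS, hzv⟩).preconnected
    ((hT.subset Set.sdiff_subset).induce_connected ⟨z, hzT, hzv⟩).preconnected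
    ⟨z, ⟨hzS, hzv⟩, hzT, hzv⟩

lemma IsBlock.exists_ne_of_adj (hB : IsBlock G B) {b u : V} (hbu : G.Adj b u) :
    ∃ c ∈ B, c ≠ b := by
  by_contra! h
  have hpair : IsNonseparable G {b, u} :=
    (isClique_pair.2 fun _ => hbu).isNonseparable (Set.insert_nonempty _ _)
  have hBb : B ⊆ {b, u} := fun c hc => .inl (h c hc)
  have hu : u ∈ B := (hB.eq_of_subset hpair hBb) ▸ Set.mem_insert_of_mem _ rfl
  exact (G.ne_of_adj hbu).symm (h u hu)

lemma IsNonseparable.exists_isBlock_superset [Finite V] (hS : IsNonseparable G S) :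
    ∃ B, IsBlock G B ∧ S ⊆ B := by
  obtain ⟨B, hSB, hB⟩ := Finite.exists_le_maximal (p := IsNonseparable G) hS
  exact ⟨B, ⟨hB.1, fun B' h₁ h₂ h₃ h => hB.eq_of_le ⟨h₁, h₂, h₃⟩ h⟩, hSB⟩

end Blocks

lemma induce_union_support_sdiff_connected {A : Set V} {x y c b : V} (q : G.Walk c b)
    (hq : q.IsPath) (hA : (G.induce A).Connected) (hqA : ∀ u ∈ q.support, u ∉ A)
    (hxA : x ∈ A) (hxb : G.Adj x b) (hyA : y ∈ A) (hyc : G.Adj y c) {v : V}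
    (hv : v ∈ q.support) : (G.induce ((A ∪ {u | u ∈ q.support}) \ {v})).Connected := by
  induction q generalizing A y with
  | nil =>
    rw [Walk.support_nil, List.mem_singleton] at hv
    subst hv
    have hset : (A ∪ {u | u ∈ (Walk.nil : G.Walk v v).support}) \ {v} = A := by
      ext u
      simp only [Walk.support_nil, List.mem_singleton, Set.mem_sdiff, Set.mem_union,
        Set.mem_ofPred_eq, Set.mem_singleton_iff]
      exact ⟨fun h => h.1.resolve_right h.2,
        fun h => ⟨.inl h, fun hu => hqA v (by simp) (hu ▸ h)⟩⟩
    rwa [hset]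
  | @cons c z b hcz t ih =>
    have hct : c ∉ t.support := ((Walk.cons_isPath_iff _ _).1 hq).2
    have hcA : c ∉ A := hqA c (by simp)
    rcases List.mem_cons.1 (Walk.support_cons hcz t ▸ hv) with rfl | hvt
    · have hset : (A ∪ {u | u ∈ (Walk.cons hcz t).support}) \ {v} =
          A ∪ {u | u ∈ t.support} := by
        ext u
        simp only [Walk.support_cons, List.mem_cons, Set.mem_sdiff, Set.mem_union,
          Set.mem_ofPred_eq, Set.mem_singleton_iff]
        constructor
        · rintro ⟨hu | rfl | hu, hne⟩
          exacts [.inl hu, absurd rfl hne, .inr hu]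
        · rintro (hu | hu)
          exacts [⟨.inl hu, fun h => hcA (h ▸ hu)⟩, ⟨.inr (.inr hu), fun h => hct (h ▸ hu)⟩]
      rw [hset]
      exact connected_induce_union hA.preconnected t.connected_induce_support.preconnected hxA
        t.end_mem_support hxb
    · have hA' : (G.induce (insert c A)).Connected := by
        rw [Set.insert_eq, Set.union_comm]
        exact connected_induce_union hA.preconnected
          ((isClique_singleton c).induce_connected (Set.singleton_nonempty c)).preconnected
          hyA rfl hyc
      have hres := ih ((Walk.cons_isPath_iff _ _).1 hq).1 hA'
        (fun u hu h => (Set.mem_insert_iff.1 h).elim (fun h' => hct (h' ▸ hu))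
          (hqA u (List.mem_cons_of_mem _ hu)))
        (Set.mem_insert_of_mem _ hxA) hxb (Set.mem_insert c A) hcz hvt
      have hset : (insert c A ∪ {u | u ∈ t.support}) \ {v} =
          (A ∪ {u | u ∈ (Walk.cons hcz t).support}) \ {v} := by
        ext u
        simp only [Walk.support_cons, List.mem_cons, Set.mem_sdiff, Set.mem_union,
          Set.mem_ofPred_eq, Set.mem_insert_iff, Set.mem_singleton_iff]
        tauto
      rwa [hset] at hres

/-- A path together with a vertex adjacent to both of its ends spans a cycle. -/
lemma isNonseparable_insert_support {x a b : V} (q : G.Walk a b) (hq : q.IsPath)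
    (hx : x ∉ q.support) (ha : G.Adj x a) (hb : G.Adj x b) :
    IsNonseparable G (insert x {u | u ∈ q.support}) := by
  have hcycle : insert x {u | u ∈ q.support} = {u | u ∈ (Walk.cons ha q).support} := by
    ext u; simp
  refine ⟨Set.insert_nonempty _ _, hcycle ▸ (Walk.cons ha q).connected_induce_support,
    fun v hv _ => ?_⟩
  rcases hv with rfl | hvq
  · rw [Set.insert_sdiff_self_of_notMem (s := {u | u ∈ q.support}) hx]
    exact q.connected_induce_support
  · rw [Set.insert_eq]
    exact induce_union_support_sdiff_connected q hq
      ((isClique_singleton x).induce_connected (Set.singleton_nonempty x))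
      (fun u hu h => hx (h ▸ hu)) rfl hb rfl ha hvq

section BlockGraph

variable {B S : Set V}

lemma IsBlockGraph.isClique (hbg : IsBlockGraph G) (hB : IsBlock G B) : G.IsClique B :=
  fun u hu v hv => hbg B hB u hu v hv

lemma IsBlockGraph.subset_cnbr (hbg : IsBlockGraph G) (hB : IsBlock G B) {d : V} (hd : d ∈ B) :
    B ⊆ cnbr G d := fun z hz =>
  (eq_or_ne z d).elim (fun h => h ▸ self_mem_cnbr z)
    fun h => mem_cnbr_of_adj (hbg.isClique hB hd hz h.symm)

lemma IsBlockGraph.isClique_of_isNonseparable [Finite V] (hbg : IsBlockGraph G)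
    (hS : IsNonseparable G S) : G.IsClique S := by
  obtain ⟨B, hB, hSB⟩ := hS.exists_isBlock_superset
  exact (hbg.isClique hB).subset hSB

lemma IsBlockGraph.eq_of_mem_inter (hbg : IsBlockGraph G) {B' : Set V} (hB : IsBlock G B)
    (hB' : IsBlock G B') (hne : B ≠ B') {x y : V} (hx : x ∈ B ∩ B') (hy : y ∈ B ∩ B') :
    x = y := by
  by_contra hxy
  have hU := isNonseparable_union_of_isClique (hbg.isClique hB) (hbg.isClique hB') hx hy hxy
  have hBU : B = B ∪ B' := hB.eq_of_subset hU Set.subset_union_left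
  exact hne (hB'.eq_of_subset hB.isNonseparable
    (Set.subset_union_right.trans hBU.symm.subset)).symm

lemma IsBlockGraph.isClique_cnbr [Finite V] (hbg : IsBlockGraph G) {x : V}
    (hx : ¬ IsCutVertex G x) : G.IsClique (cnbr G x) := by
  refine isClique_insert.2 ⟨fun a ha b hb hab => ?_, fun a ha _ => ha⟩
  have hxa : a ∈ ({x}ᶜ : Set V) := (G.ne_of_adj ha).symm
  have hxb : b ∈ ({x}ᶜ : Set V) := (G.ne_of_adj hb).symm
  obtain ⟨W, hW⟩ := (not_not.1 hx ⟨a, hxa⟩ ⟨b, hxb⟩).exists_isPath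
  let e := Embedding.induce (G := G) ({x}ᶜ : Set V)
  have hx' : x ∉ (W.map e.toHom).support := by
    rw [Walk.support_map, List.mem_map]
    rintro ⟨y, -, hy⟩
    exact y.2 hy
  have hcycle := isNonseparable_insert_support _ (hW.map e.injective) hx' ha hb
  exact hbg.isClique_of_isNonseparable hcycle (.inr (Walk.start_mem_support _))
    (.inr (Walk.end_mem_support _)) hab

lemma IsBlockGraph.eq_cnbr_of_not_isCutVertex [Finite V] (hbg : IsBlockGraph G)
    (hB : IsBlock G B) {x : V} (hxB : x ∈ B) (hx : ¬ IsCutVertex G x) : B = cnbr G x :=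
  hB.eq_of_subset ((hbg.isClique_cnbr hx).isNonseparable ⟨x, self_mem_cnbr x⟩)
    (hbg.subset_cnbr hB hxB)

lemma IsBlockGraph.isBlock_cnbr [Finite V] (hbg : IsBlockGraph G) {x : V}
    (hx : ¬ IsCutVertex G x) : IsBlock G (cnbr G x) := by
  refine ⟨(hbg.isClique_cnbr hx).isNonseparable ⟨x, self_mem_cnbr x⟩,
    fun B' h₁ h₂ h₃ hsub => ?_⟩
  obtain ⟨B, hB, hB'B⟩ := IsNonseparable.exists_isBlock_superset (G := G) ⟨h₁, h₂, h₃⟩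
  have hBx := hbg.eq_cnbr_of_not_isCutVertex hB (hB'B (hsub (self_mem_cnbr x))) hx
  exact hsub.antisymm (hB'B.trans hBx.subset)

end BlockGraph

lemma IsCutVertex.exists_adj_notMem_cnbr (hG : G.Preconnected) {d u : V}
    (hu : IsCutVertex G u) (hdu : G.Adj d u) : ∃ w, G.Adj u w ∧ w ∉ cnbr G d := by
  classical
  by_contra! hN
  refine hu fun ⟨a, ha⟩ ⟨b, hb⟩ => ?_
  have hd : d ∈ ({u}ᶜ : Set V) := G.ne_of_adj hdu
  -- as `N(u) ⊆ N[d]`, `f` turns every walk of `G` into one avoiding `u`, passing through `d`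
  let f : V → ({u}ᶜ : Set V) := fun v => if hv : v = u then ⟨d, hd⟩ else ⟨v, hv⟩
  have hfu : f u = ⟨d, hd⟩ := dif_pos rfl
  have hf : ∀ v (hv : v ≠ u), f v = ⟨v, hv⟩ := fun v hv => dif_neg hv
  have hnear : ∀ v (hv : v ≠ u), v ∈ cnbr G d → (G.induce {u}ᶜ).Reachable ⟨d, hd⟩ ⟨v, hv⟩ := by
    rintro v hv (rfl | hdv)
    exacts [.rfl, Adj.reachable hdv]
  have hstep : ∀ v w, G.Adj v w → (G.induce {u}ᶜ).Reachable (f v) (f w) := by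
    intro v w hvw
    by_cases hv : v = u
    · subst hv
      have hw : w ≠ v := (G.ne_of_adj hvw).symm
      rw [hfu, hf w hw]
      exact hnear w hw (hN w hvw)
    by_cases hw : w = u
    · subst hw
      rw [hfu, hf v hv]
      exact (hnear v hv (hN v hvw.symm)).symm
    rw [hf v hv, hf w hw]
    exact Adj.reachable hvw
  rw [reachable_iff_reflTransGen, ← hf a ha, ← hf b hb]
  exact ((reachable_iff_reflTransGen _ _).1 (hG a b)).lift' f
    fun v w h => (reachable_iff_reflTransGen _ _).1 (hstep v w h)

section Domination

variable {D T : Set V}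

lemma IsPacking.eq_of_mem_cnbr (hD : IsPacking G D) {d d' v : V} (hd : d ∈ D) (hd' : d' ∈ D)
    (hv : v ∈ cnbr G d) (hv' : v ∈ cnbr G d') : d = d' :=
  by_contra fun hne => Set.disjoint_left.1 (hD hd hd' hne) hv hv'

lemma IsPacking.not_adj (hD : IsPacking G D) {d d' : V} (hd : d ∈ D) (hd' : d' ∈ D)
    (hne : d ≠ d') : ¬ G.Adj d d' :=
  fun h => hne (hD.eq_of_mem_cnbr hd hd' (mem_cnbr_of_adj h) (self_mem_cnbr d'))

lemma domNum_le (hD : IsDomSet G D) : domNum G ≤ D.ncard := Nat.sInf_le ⟨D, hD, rfl⟩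

lemma totalDomNum_le (hT : IsTotalDomSet G T) : totalDomNum G ≤ T.ncard :=
  Nat.sInf_le ⟨T, hT, rfl⟩

lemma exists_isMinDomSet (G : SimpleGraph V) : ∃ D, IsMinDomSet G D :=
  Nat.sInf_mem (s := {n | ∃ S : Set V, IsDomSet G S ∧ S.ncard = n})
    ⟨_, Set.univ, fun v hv => absurd (Set.mem_univ v) hv, rfl⟩

lemma NoIsolated.exists_isTotalDomSet (hni : NoIsolated G) :
    ∃ T, IsTotalDomSet G T ∧ T.ncard = totalDomNum G :=
  Nat.sInf_mem (s := {n | ∃ S : Set V, IsTotalDomSet G S ∧ S.ncard = n})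
    ⟨_, Set.univ, fun v => ⟨_, Set.mem_univ _, (hni v).choose_spec.symm⟩, rfl⟩

lemma totalDomNum_le_two_mul_domNum [Finite V] (hni : NoIsolated G) :
    totalDomNum G ≤ 2 * domNum G := by
  obtain ⟨D, hD, hcard⟩ := exists_isMinDomSet G
  choose f hf using hni
  have hT : IsTotalDomSet G (D ∪ f '' D) := fun v => by
    by_cases hv : v ∈ D
    · exact ⟨f v, .inr ⟨v, hv, rfl⟩, (hf v).symm⟩
    · obtain ⟨u, hu, huv⟩ := hD v hv
      exact ⟨u, .inl hu, huv⟩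
  calc totalDomNum G ≤ (D ∪ f '' D).ncard := totalDomNum_le hT
    _ ≤ D.ncard + (f '' D).ncard := Set.ncard_union_le _ _
    _ ≤ 2 * domNum G := by
      have := Set.ncard_image_le (f := f) (s := D)
      omega

lemma IsTotalDomSet.nontrivial_inter_cnbr (hT : IsTotalDomSet G T) {d : V} (hd : d ∈ T) :
    (T ∩ cnbr G d).Nontrivial := by
  obtain ⟨t, htT, htd⟩ := hT d
  exact ⟨d, ⟨hd, self_mem_cnbr d⟩, t, ⟨htT, mem_cnbr_of_adj htd.symm⟩, (G.ne_of_adj htd).symm⟩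

lemma IsPacking.two_mul_ncard_le [Finite V] (hD : IsPacking G D)
    (hT : ∀ d ∈ D, (T ∩ cnbr G d).Nontrivial) : 2 * D.ncard ≤ T.ncard := by
  choose! t₁ ht₁ t₂ ht₂ hne using hT
  have hinj : ∀ t : V → V, (∀ d ∈ D, t d ∈ T ∩ cnbr G d) → D.InjOn t :=
    fun t ht d hd d' hd' h => hD.eq_of_mem_cnbr hd hd' (ht d hd).2 (h ▸ (ht d' hd').2)
  have hdisj : Disjoint (t₁ '' D) (t₂ '' D) := by
    refine Set.disjoint_left.2 ?_
    rintro _ ⟨d, hd, rfl⟩ ⟨d', hd', h⟩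
    obtain rfl := hD.eq_of_mem_cnbr hd' hd (ht₂ d' hd').2 (h ▸ (ht₁ d hd).2)
    exact hne d' hd' h.symm
  have hsub : t₁ '' D ∪ t₂ '' D ⊆ T := Set.union_subset
    (Set.image_subset_iff.2 fun d hd => (ht₁ d hd).1)
    (Set.image_subset_iff.2 fun d hd => (ht₂ d hd).1)
  calc 2 * D.ncard = (t₁ '' D).ncard + (t₂ '' D).ncard := by
        rw [(hinj t₁ ht₁).ncard_image, (hinj t₂ ht₂).ncard_image]; ring
    _ = (t₁ '' D ∪ t₂ '' D).ncard := (Set.ncard_union_eq hdisj).symm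
    _ ≤ T.ncard := Set.ncard_le_ncard hsub

lemma totalDomNum_lt_of_not_isPacking [Finite V] (hni : NoIsolated G) (hD : IsDomSet G D)
    (hp : ¬ IsPacking G D) : totalDomNum G < 2 * D.ncard := by
  obtain ⟨d₁, hd₁, d₂, hd₂, hne, hnd⟩ :
      ∃ d₁ ∈ D, ∃ d₂ ∈ D, d₁ ≠ d₂ ∧ ¬ Disjoint (cnbr G d₁) (cnbr G d₂) := by
    simpa [IsPacking, Set.Pairwise] using hp
  obtain ⟨z, hz₁, hz₂⟩ := Set.not_disjoint_iff.1 hnd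
  choose f hf using hni
  set T := insert z D ∪ f '' (D \ {d₁, d₂})
  -- `z` totally dominates `d₁` and `d₂`, unless it is one of them and then the other one does
  have hz : ∀ a ∈ D, ∀ b ∈ D, a ≠ b → z ∈ cnbr G a → z ∈ cnbr G b → ∃ u ∈ T, G.Adj u a := by
    rintro a - b hb hab (rfl | hza) hzb
    · exact ⟨b, .inl (.inr hb), hzb.resolve_left hab⟩
    · exact ⟨z, .inl (.inl rfl), hza.symm⟩
  have hT : IsTotalDomSet G T := by
    intro v
    by_cases hvD : v ∈ D
    · by_cases hv₁ : v = d₁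
      · exact hv₁ ▸ hz d₁ hd₁ d₂ hd₂ hne hz₁ hz₂
      by_cases hv₂ : v = d₂
      · exact hv₂ ▸ hz d₂ hd₂ d₁ hd₁ hne.symm hz₂ hz₁
      exact ⟨f v, .inr ⟨v, ⟨hvD, by simp [hv₁, hv₂]⟩, rfl⟩, (hf v).symm⟩
    · obtain ⟨u, hu, huv⟩ := hD v hvD
      exact ⟨u, .inl (.inr hu), huv⟩
  have hsub : ({d₁, d₂} : Set V) ⊆ D := Set.insert_subset hd₁ (Set.singleton_subset_iff.2 hd₂)
  have h₂ := Set.ncard_le_ncard hsub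
  rw [Set.ncard_pair hne] at h₂
  calc totalDomNum G ≤ T.ncard := totalDomNum_le hT
    _ ≤ (insert z D).ncard + (f '' (D \ {d₁, d₂})).ncard := Set.ncard_union_le _ _
    _ < 2 * D.ncard := by
      have := Set.ncard_insert_le z D
      have := Set.ncard_image_le (f := f) (s := D \ {d₁, d₂})
      have := Set.ncard_sdiff hsub
      rw [Set.ncard_pair hne] at this
      omega

lemma totalDomNum_lt_of_exchange [Finite V] (hD : IsDomSet G D) {d c : V} (hd : d ∈ D)
    (hdc : G.Adj d c) {g : V → V} (hg : ∀ e ∈ D \ {d}, G.Adj e (g e))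
    (hcover : ∀ v, G.Adj d v → G.Adj c v ∨ ∃ e ∈ D \ {d}, G.Adj (g e) v) :
    totalDomNum G < 2 * D.ncard := by
  set T := insert c (D \ {d}) ∪ g '' (D \ {d})
  have hT : IsTotalDomSet G T := by
    intro v
    by_cases hvD : v ∈ D
    · by_cases hvd : v = d
      · exact ⟨c, .inl (.inl rfl), hvd ▸ hdc.symm⟩
      · exact ⟨g v, .inr ⟨v, ⟨hvD, hvd⟩, rfl⟩, (hg v ⟨hvD, hvd⟩).symm⟩
    · obtain ⟨e, heD, hev⟩ := hD v hvD
      by_cases hed : e = d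
      · rcases hcover v (hed ▸ hev) with hcv | ⟨e', he', hgv⟩
        exacts [⟨c, .inl (.inl rfl), hcv⟩, ⟨g e', .inr ⟨e', he', rfl⟩, hgv⟩]
      · exact ⟨e, .inl (.inr ⟨heD, hed⟩), hev⟩
  have h₀ : 0 < D.ncard := (Set.ncard_pos).2 ⟨d, hd⟩
  calc totalDomNum G ≤ T.ncard := totalDomNum_le hT
    _ ≤ (insert c (D \ {d})).ncard + (g '' (D \ {d})).ncard := Set.ncard_union_le _ _
    _ < 2 * D.ncard := by
      have := Set.ncard_insert_le c (D \ {d})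
      have := Set.ncard_image_le (f := g) (s := D \ {d})
      have := Set.ncard_sdiff_singleton_of_mem hd
      omega

lemma IsMinDomSet.insert_sdiff [Finite V] (hD : IsMinDomSet G D) {d c : V} (hd : d ∈ D)
    (hdc : G.Adj d c) (hN : G.neighborSet d ⊆ cnbr G c) :
    IsMinDomSet G (insert c (D \ {d})) := by
  have hdom : IsDomSet G (insert c (D \ {d})) := by
    intro v hv
    simp only [Set.mem_insert_iff, Set.mem_sdiff, Set.mem_singleton_iff, not_or, not_and,
      not_not] at hv
    obtain ⟨hvc, hvd⟩ := hv
    by_cases hvD : v ∈ D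
    · obtain rfl := hvd hvD
      exact ⟨c, .inl rfl, hdc.symm⟩
    · obtain ⟨u, huD, huv⟩ := hD.1 v hvD
      by_cases hud : u = d
      · subst hud
        exact ⟨c, .inl rfl, (hN huv).resolve_left hvc⟩
      · exact ⟨u, .inr ⟨huD, hud⟩, huv⟩
  refine ⟨hdom, le_antisymm ?_ (domNum_le hdom)⟩
  have := Set.ncard_insert_le c (D \ {d})
  have := Set.ncard_sdiff_singleton_of_mem hd
  have : 0 < D.ncard := (Set.ncard_pos).2 ⟨d, hd⟩
  have := hD.2
  omega

end Domination

section BlockGraphDomination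

variable {D T : Set V}

lemma noIsolated_of_isBlock_ne (hconn : G.Connected)
    (h2b : ∃ B₁ B₂ : Set V, IsBlock G B₁ ∧ IsBlock G B₂ ∧ B₁ ≠ B₂) : NoIsolated G := by
  obtain ⟨B₁, B₂, hB₁, hB₂, hB⟩ := h2b
  have := hB₁.nontrivial_of_ne hB₂ hB
  exact hconn.preconnected.exists_adj_of_nontrivial

lemma IsBlockGraph.eq_of_adj_of_adj [Finite V] (hbg : IsBlockGraph G) (hp : IsPacking G D)
    {d e u₁ u₂ w₁ w₂ : V} (hd : d ∈ D) (he : e ∈ D) (hed : e ≠ d)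
    (hu₁ : G.Adj d u₁) (hu₂ : G.Adj d u₂) (hw₁ : G.Adj u₁ w₁) (hw₂ : G.Adj u₂ w₂)
    (hw₁d : w₁ ∉ cnbr G d) (hw₂d : w₂ ∉ cnbr G d) (hew₁ : G.Adj e w₁) (hew₂ : G.Adj e w₂) :
    u₁ = u₂ := by
  by_contra hu
  have hu₁e : u₁ ∉ cnbr G e := fun h => hed (hp.eq_of_mem_cnbr he hd h (mem_cnbr_of_adj hu₁))
  have hu₂e : u₂ ∉ cnbr G e := fun h => hed (hp.eq_of_mem_cnbr he hd h (mem_cnbr_of_adj hu₂))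
  -- distinctness of the cycle vertices, for `simp [*]` below
  have h₁ := G.ne_of_adj hu₁; have h₂ := G.ne_of_adj hu₂; have h₃ := G.ne_of_adj hw₁
  have h₄ := G.ne_of_adj hw₂; have h₅ := G.ne_of_adj hew₁; have h₆ := G.ne_of_adj hew₂
  have h₇ : d ≠ w₁ := fun h => hw₁d (h ▸ self_mem_cnbr d)
  have h₈ : d ≠ w₂ := fun h => hw₂d (h ▸ self_mem_cnbr d)
  have h₉ : u₁ ≠ e := fun h => hu₁e (by rw [h]; exact self_mem_cnbr e)
  have h₁₀ : u₂ ≠ e := fun h => hu₂e (by rw [h]; exact self_mem_cnbr e)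
  have h₁₁ : u₁ ≠ w₂ := fun h => hu₁e (h ▸ mem_cnbr_of_adj hew₂)
  have h₁₂ : u₂ ≠ w₁ := fun h => hu₂e (h ▸ mem_cnbr_of_adj hew₁)
  rcases eq_or_ne w₁ w₂ with rfl | hw
  · -- the 4-cycle `d u₁ w₁ u₂` has the chord `d w₁`
    let q := Walk.cons hw₁ (Walk.cons hw₂.symm Walk.nil)
    have hq : q.IsPath := by simp [q, Walk.cons_isPath_iff, *, h₄.symm]
    have hcycle := isNonseparable_insert_support q hq (by simp [q, *]) hu₁ hu₂
    exact hw₁d (mem_cnbr_of_adj (hbg.isClique_of_isNonseparable hcycle (.inl rfl)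
      (.inr (by simp [q])) h₇))
  · -- the 6-cycle `d u₁ w₁ e w₂ u₂` has the chord `d e`
    let q := Walk.cons hw₁ (Walk.cons hew₁.symm (Walk.cons hew₂ (Walk.cons hw₂.symm Walk.nil)))
    have hq : q.IsPath := by
      simp [q, Walk.cons_isPath_iff, *, h₄.symm, h₅.symm, h₁₂.symm, h₁₀.symm]
    have hcycle := isNonseparable_insert_support q hq (by simp [q, *, hed.symm]) hu₁ hu₂
    exact hp.not_adj hd he hed.symm (hbg.isClique_of_isNonseparable hcycle (.inl rfl)
      (.inr (by simp [q])) hed.symm)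

lemma IsTotalDomSet.nontrivial_inter_cnbr_of_mem_D1set [Finite V] (hbg : IsBlockGraph G)
    (hni : NoIsolated G) (hT : IsTotalDomSet G T) {d : V} (hd : d ∈ D1set G) :
    (T ∩ cnbr G d).Nontrivial := by
  obtain ⟨-, B, hB, hdB, hB₁⟩ := hd
  have hBeq : ∀ x ∈ B, x ≠ d → B = cnbr G x := fun x hx hxd =>
    hbg.eq_cnbr_of_not_isCutVertex hB hx fun h => hxd (hB₁ x hx h)
  obtain ⟨u, huB, hud⟩ := hB.exists_ne_of_adj (hni d).choose_spec
  obtain ⟨t₁, ht₁, ht₁u⟩ := hT u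
  have ht₁B : t₁ ∈ B := by rw [hBeq u huB hud]; exact mem_cnbr_of_adj ht₁u.symm
  rcases eq_or_ne t₁ d with rfl | ht₁d
  · exact hT.nontrivial_inter_cnbr ht₁
  obtain ⟨t₂, ht₂, ht₂t₁⟩ := hT t₁
  have ht₂B : t₂ ∈ B := by rw [hBeq t₁ ht₁B ht₁d]; exact mem_cnbr_of_adj ht₂t₁.symm
  exact ⟨t₁, ⟨ht₁, hbg.subset_cnbr hB hdB ht₁B⟩, t₂, ⟨ht₂, hbg.subset_cnbr hB hdB ht₂B⟩,
    (G.ne_of_adj ht₂t₁).symm⟩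

lemma IsTotalDomSet.nontrivial_inter_cnbr_of_mem_D2set [Finite V] (hbg : IsBlockGraph G)
    (hT : IsTotalDomSet G T) {d : V} (hd : d ∈ D2set G) : (T ∩ cnbr G d).Nontrivial := by
  obtain ⟨-, x, y, -, hdx, hdy, hx, hy, Bx, By, hBx, hBy, hxB, hyB, hne⟩ := hd
  have hBx' := hbg.eq_cnbr_of_not_isCutVertex hBx hxB hx
  have hBy' := hbg.eq_cnbr_of_not_isCutVertex hBy hyB hy
  have hdBx : d ∈ Bx := by rw [hBx']; exact mem_cnbr_of_adj hdx.symm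
  have hdBy : d ∈ By := by rw [hBy']; exact mem_cnbr_of_adj hdy.symm
  obtain ⟨t₁, ht₁, ht₁x⟩ := hT x
  obtain ⟨t₂, ht₂, ht₂y⟩ := hT y
  have ht₁B : t₁ ∈ Bx := by rw [hBx']; exact mem_cnbr_of_adj ht₁x.symm
  have ht₂B : t₂ ∈ By := by rw [hBy']; exact mem_cnbr_of_adj ht₂y.symm
  rcases eq_or_ne t₁ t₂ with rfl | ht
  · obtain rfl := hbg.eq_of_mem_inter hBx hBy hne ⟨ht₁B, ht₂B⟩ ⟨hdBx, hdBy⟩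
    exact hT.nontrivial_inter_cnbr ht₁
  · exact ⟨t₁, ⟨ht₁, hbg.subset_cnbr hBx hdBx ht₁B⟩, t₂, ⟨ht₂, hbg.subset_cnbr hBy hdBy ht₂B⟩, ht⟩

lemma two_mul_ncard_le_totalDomNum [Finite V] (hbg : IsBlockGraph G) (hni : NoIsolated G)
    (hD : D ⊆ D1set G ∪ D2set G) (hp : IsPacking G D) : 2 * D.ncard ≤ totalDomNum G := by
  obtain ⟨T, hT, hTcard⟩ := hni.exists_isTotalDomSet
  exact hTcard ▸ hp.two_mul_ncard_le fun d hd => (hD hd).elim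
    (hT.nontrivial_inter_cnbr_of_mem_D1set hbg hni) (hT.nontrivial_inter_cnbr_of_mem_D2set hbg)

lemma D1set_subset [Finite V] (hbg : IsBlockGraph G) (hni : NoIsolated G) (hD : IsDomSet G D)
    (hcut : ∀ d ∈ D, IsCutVertex G d) : D1set G ⊆ D := by
  rintro v ⟨-, B, hB, hvB, hB₁⟩
  obtain ⟨u, huB, huv⟩ := hB.exists_ne_of_adj (hni v).choose_spec
  have hu : ¬ IsCutVertex G u := fun h => huv (hB₁ u huB h)
  obtain ⟨e, he, heu⟩ := hD u fun h => hu (hcut u h)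
  have heB : e ∈ B := by
    rw [hbg.eq_cnbr_of_not_isCutVertex hB huB hu]; exact mem_cnbr_of_adj heu.symm
  exact hB₁ e heB (hcut e he) ▸ he

lemma D2set_subset [Finite V] (hbg : IsBlockGraph G) (hD : IsDomSet G D)
    (hcut : ∀ d ∈ D, IsCutVertex G d) (hp : IsPacking G D) : D2set G ⊆ D := by
  rintro v ⟨-, x, y, -, hvx, hvy, hx, hy, Bx, By, hBx, hBy, hxB, hyB, hne⟩
  by_contra hv
  have hBx' := hbg.eq_cnbr_of_not_isCutVertex hBx hxB hx
  have hBy' := hbg.eq_cnbr_of_not_isCutVertex hBy hyB hy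
  have hvBx : v ∈ Bx := by rw [hBx']; exact mem_cnbr_of_adj hvx.symm
  have hvBy : v ∈ By := by rw [hBy']; exact mem_cnbr_of_adj hvy.symm
  obtain ⟨ex, hex, hexx⟩ := hD x fun h => hx (hcut x h)
  obtain ⟨ey, hey, heyy⟩ := hD y fun h => hy (hcut y h)
  have hexB : ex ∈ Bx := by rw [hBx']; exact mem_cnbr_of_adj hexx.symm
  have heyB : ey ∈ By := by rw [hBy']; exact mem_cnbr_of_adj heyy.symm
  have hexv : ex ≠ v := fun h => hv (h ▸ hex)
  have heyv : ey ≠ v := fun h => hv (h ▸ hey)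
  -- `v` is dominated by both `ex` and `ey`, so they coincide and lie in `Bx ∩ By = {v}`
  obtain rfl : ex = ey := hp.eq_of_mem_cnbr hex hey
    (mem_cnbr_of_adj (hbg.isClique hBx hexB hvBx hexv))
    (mem_cnbr_of_adj (hbg.isClique hBy heyB hvBy heyv))
  exact hexv (hbg.eq_of_mem_inter hBx hBy hne ⟨hexB, heyB⟩ ⟨hvBx, hvBy⟩)

lemma exists_adj_forall_adj_of_notMem_D1set_D2set [Finite V] (hbg : IsBlockGraph G)
    (hni : NoIsolated G) {d : V} (hd : IsCutVertex G d) (h₁ : d ∉ D1set G)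
    (h₂ : d ∉ D2set G) : ∃ c, G.Adj d c ∧ ∀ y, G.Adj d y → ¬ IsCutVertex G y → G.Adj c y := by
  by_cases hx : ∃ x, G.Adj d x ∧ ¬ IsCutVertex G x
  · obtain ⟨x, hdx, hx⟩ := hx
    have hBx := hbg.isBlock_cnbr hx
    have hdBx : d ∈ cnbr G x := mem_cnbr_of_adj hdx.symm
    obtain ⟨c, hcB, hc, hcd⟩ : ∃ c ∈ cnbr G x, IsCutVertex G c ∧ c ≠ d := by
      by_contra! h
      exact h₁ ⟨hd, _, hBx, hdBx, h⟩
    refine ⟨c, hbg.isClique hBx hdBx hcB hcd.symm, fun y hdy hy => ?_⟩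
    have hxy : cnbr G y = cnbr G x := by
      by_contra hne
      exact h₂ ⟨hd, y, x, fun h => hne (h ▸ rfl), hdy, hdx, hy, hx, _, _,
        hbg.isBlock_cnbr hy, hBx, self_mem_cnbr y, self_mem_cnbr x, hne⟩
    exact hbg.isClique (hbg.isBlock_cnbr hy) (hxy ▸ hcB) (self_mem_cnbr y) fun h => hy (h ▸ hc)
  · push Not at hx
    obtain ⟨c, hdc⟩ := hni d
    exact ⟨c, hdc, fun y hdy hy => absurd (hx y hdy) hy⟩

lemma IsMinDomSet.isPacking [Finite V] (hni : NoIsolated G)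
    (hγ : totalDomNum G = 2 * domNum G) (hD : IsMinDomSet G D) : IsPacking G D := by
  by_contra hp
  have := totalDomNum_lt_of_not_isPacking hni hD.1 hp
  rw [hD.2] at this
  omega

lemma IsMinDomSet.isCutVertex_of_mem [Finite V] (hconn : G.Connected) (hbg : IsBlockGraph G)
    (h2b : ∃ B₁ B₂ : Set V, IsBlock G B₁ ∧ IsBlock G B₂ ∧ B₁ ≠ B₂)
    (hγ : totalDomNum G = 2 * domNum G) (hD : IsMinDomSet G D) {d : V} (hd : d ∈ D) :
    IsCutVertex G d := by
  have hni := noIsolated_of_isBlock_ne hconn h2b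
  have hp := hD.isPacking hni hγ
  by_contra hnc
  have hBd := hbg.isBlock_cnbr hnc
  obtain ⟨z, hz⟩ : ∃ z, z ∉ cnbr G d := by
    by_contra! h
    obtain ⟨B₁, B₂, hB₁, hB₂, hB⟩ := h2b
    have hsub : ∀ B, B ⊆ cnbr G d := fun B z _ => h z
    exact hB ((hB₁.eq_of_subset hBd.isNonseparable (hsub B₁)).trans
      (hB₂.eq_of_subset hBd.isNonseparable (hsub B₂)).symm)
  obtain ⟨⟨⟨c, w⟩, hcw⟩, -, hc, hw⟩ :=
    (hconn.preconnected d z).some.exists_boundary_dart _ (self_mem_cnbr d) hz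
  replace hc : c ∈ cnbr G d := hc
  replace hw : w ∉ cnbr G d := hw
  have hcd : c ≠ d := fun h => hw (h ▸ mem_cnbr_of_adj hcw)
  have hdc : G.Adj d c := hc.resolve_left hcd
  have hcD : c ∉ D := fun h => hp.not_adj hd h hcd.symm hdc
  -- `N[d]` is a clique, so `c` can replace `d` in the minimum dominating set
  have hD' := hD.insert_sdiff hd hdc fun v hv =>
    (eq_or_ne v c).elim .inl fun hvc => .inr (hbg.isClique_cnbr hnc hc (.inr hv) hvc.symm)
  obtain ⟨e, he, hec, hwe⟩ : ∃ e ∈ insert c (D \ {d}), e ≠ c ∧ w ∈ cnbr G e := by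
    by_cases hwD : w ∈ D
    · exact ⟨w, .inr ⟨hwD, fun h => hw (h ▸ self_mem_cnbr w)⟩, (G.ne_of_adj hcw).symm,
        self_mem_cnbr w⟩
    · obtain ⟨e, heD, hew⟩ := hD.1 w hwD
      exact ⟨e, .inr ⟨heD, fun h => hw (h ▸ mem_cnbr_of_adj hew)⟩, fun h => hcD (h ▸ heD),
        mem_cnbr_of_adj hew⟩
  exact hec ((hD'.isPacking hni hγ).eq_of_mem_cnbr he (.inl rfl) hwe (mem_cnbr_of_adj hcw))

lemma IsMinDomSet.mem_D1set_union_D2set [Finite V] (hconn : G.Connected)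
    (hbg : IsBlockGraph G) (h2b : ∃ B₁ B₂ : Set V, IsBlock G B₁ ∧ IsBlock G B₂ ∧ B₁ ≠ B₂)
    (hγ : totalDomNum G = 2 * domNum G) (hD : IsMinDomSet G D) {d : V} (hd : d ∈ D) :
    d ∈ D1set G ∪ D2set G := by
  by_contra hd₁₂
  rw [Set.mem_union, not_or] at hd₁₂
  have hni := noIsolated_of_isBlock_ne hconn h2b
  have hp := hD.isPacking hni hγ
  obtain ⟨c, hdc, hc⟩ := exists_adj_forall_adj_of_notMem_D1set_D2set hbg hni
    (hD.isCutVertex_of_mem hconn hbg h2b hγ hd) hd₁₂.1 hd₁₂.2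
  -- each `e ∈ D \ {d}` gets a private neighbour serving the (at most one) cut-neighbour of `d`
  -- that reaches `N(e)` outside `N[d]`
  have hg : ∀ e ∈ D \ {d}, ∃ t, G.Adj e t ∧ ∀ u w, G.Adj d u → G.Adj u w → w ∉ cnbr G d →
      G.Adj e w → G.Adj t u := by
    rintro e ⟨he, hed⟩
    by_cases h : ∃ u w, G.Adj d u ∧ G.Adj u w ∧ w ∉ cnbr G d ∧ G.Adj e w
    · obtain ⟨u, w, hdu, huw, hwd, hew⟩ := h
      refine ⟨w, hew, fun u' w' hdu' hu'w' hw'd hew' => ?_⟩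
      obtain rfl := hbg.eq_of_adj_of_adj hp hd he hed hdu hdu' huw hu'w' hwd hw'd hew hew'
      exact huw.symm
    · push Not at h
      obtain ⟨t, het⟩ := hni e
      exact ⟨t, het, fun u w hdu huw hwd hew => absurd hew (h u w hdu huw hwd)⟩
  choose! g hge hgu using hg
  have hlt := totalDomNum_lt_of_exchange hD.1 hd hdc hge fun v hdv => by
    by_cases hv : IsCutVertex G v
    · obtain ⟨w, hvw, hwd⟩ := hv.exists_adj_notMem_cnbr hconn.preconnected hdv
      have hwD : w ∉ D := fun h =>
        hwd (hp.eq_of_mem_cnbr h hd (mem_cnbr_of_adj hvw.symm) (mem_cnbr_of_adj hdv) ▸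
          self_mem_cnbr w)
      obtain ⟨e, he, hew⟩ := hD.1 w hwD
      have hed : e ≠ d := fun h => hwd (h ▸ mem_cnbr_of_adj hew)
      exact .inr ⟨e, ⟨he, hed⟩, hgu e ⟨he, hed⟩ v w hdv hvw hwd hew⟩
    · exact .inl (hc v hdv hv)
  rw [hD.2] at hlt
  omega

lemma IsMinDomSet.eq_D1set_union_D2set [Finite V] (hconn : G.Connected)
    (hbg : IsBlockGraph G) (h2b : ∃ B₁ B₂ : Set V, IsBlock G B₁ ∧ IsBlock G B₂ ∧ B₁ ≠ B₂)
    (hγ : totalDomNum G = 2 * domNum G) (hD : IsMinDomSet G D) :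
    D = D1set G ∪ D2set G := by
  have hni := noIsolated_of_isBlock_ne hconn h2b
  have hcut := fun d => hD.isCutVertex_of_mem hconn hbg h2b hγ (d := d)
  exact Set.Subset.antisymm (fun d hd => hD.mem_D1set_union_D2set hconn hbg h2b hγ hd)
    (Set.union_subset (D1set_subset hbg hni hD.1 hcut)
      (D2set_subset hbg hD.1 hcut (hD.isPacking hni hγ)))

end BlockGraphDomination

/-- For a connected block graph `G` with at least two blocks: `γₜ(G) = 2γ(G)` iff `G` has a
unique minimum dominating set `D`, `D = D₁ ∪ D₂`, and `D` is a packing in `G`. -/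
theorem stmt12 {V : Type*} [Fintype V] (G : SimpleGraph V) (hconn : G.Connected)
    (hbg : IsBlockGraph G)
    (h2b : ∃ B₁ B₂ : Set V, IsBlock G B₁ ∧ IsBlock G B₂ ∧ B₁ ≠ B₂) :
    totalDomNum G = 2 * domNum G ↔
      ∃ D : Set V, IsMinDomSet G D ∧ (∀ D' : Set V, IsMinDomSet G D' → D' = D) ∧
        D = D1set G ∪ D2set G ∧ IsPacking G D := by
  have hni := noIsolated_of_isBlock_ne hconn h2b
  constructor
  · intro hγ
    obtain ⟨D, hD⟩ := exists_isMinDomSet G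
    have hDeq := hD.eq_D1set_union_D2set hconn hbg h2b hγ
    exact ⟨D, hD, fun D' hD' => (hD'.eq_D1set_union_D2set hconn hbg h2b hγ).trans hDeq.symm,
      hDeq, hD.isPacking hni hγ⟩
  · rintro ⟨D, hD, -, hDeq, hp⟩
    refine (totalDomNum_le_two_mul_domNum hni).antisymm ?_
    rw [← hD.2]
    exact two_mul_ncard_le_totalDomNum hbg hni hDeq.subset hp

end TotalDom
end
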